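/- The unique integer triple (p,q,r) with p,q,r ≥ 3 satisfying cos(π/q) = sin(π/p)·sin(π/r) is (4,3,4). -/
import Mathlib
set_option maxHeartbeats 1000000

open Real

private lemma aux_sin_le {n : ℕ} (hn : 3 ≤ n) : Real.sin (π / n) ≤ √3 / 2 := by
  rw [← Real.sin_pi_div_three]
  have hn' : (3:ℝ) ≤ n := by exact_mod_cast hn
  have hd : π / n ≤ π / 3 := div_le_div_of_nonneg_left (by positivity) (by norm_num) hn'
  have h1 : 0 < π / n := by positivity
  apply Real.strictMonoOn_sin.monotoneOn ?_ ?_ hd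
  · constructor <;> nlinarith [pi_pos]
  · constructor <;> nlinarith [pi_pos]

private lemma aux_sin_pos {n : ℕ} (hn : 3 ≤ n) : 0 < Real.sin (π / n) := by
  apply Real.sin_pos_of_pos_of_lt_pi
  · have : (0:ℝ) < n := by positivity
    positivity
  · have hn' : (1:ℝ) < n := by exact_mod_cast (by omega : 1 < n)
    calc π / n < π / 1 := div_lt_div_of_pos_left pi_pos (by norm_num) hn'
      _ = π := by ring

private lemma aux_cos_ge {n : ℕ} (hn : 3 ≤ n) : Real.cos (π / 3) ≤ Real.cos (π / n) := by
  have hn' : (3:ℝ) ≤ n := by exact_mod_cast hn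
  have hd : π / n ≤ π / 3 := div_le_div_of_nonneg_left (by positivity) (by norm_num) hn'
  apply Real.cos_le_cos_of_nonneg_of_le_pi (by positivity) (by nlinarith [pi_pos]) hd

private lemma aux_cos_ge5 {n : ℕ} (hn : 5 ≤ n) : Real.cos (π / 5) ≤ Real.cos (π / n) := by
  have hn' : (5:ℝ) ≤ n := by exact_mod_cast hn
  have hd : π / n ≤ π / 5 := div_le_div_of_nonneg_left (by positivity) (by norm_num) hn'
  apply Real.cos_le_cos_of_nonneg_of_le_pi (by positivity) (by nlinarith [pi_pos]) hd

private lemma aux_sin_le6 {n : ℕ} (hn : 6 ≤ n) : Real.sin (π / n) ≤ 1 / 2 := by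
  rw [← Real.sin_pi_div_six]
  have hn' : (6:ℝ) ≤ n := by exact_mod_cast hn
  have hd : π / n ≤ π / 6 := div_le_div_of_nonneg_left (by positivity) (by norm_num) hn'
  have h1 : 0 < π / n := by positivity
  apply Real.strictMonoOn_sin.monotoneOn ?_ ?_ hd
  · constructor <;> nlinarith [pi_pos]
  · constructor <;> nlinarith [pi_pos]

theorem euclidean_honeycomb_unique (p q r : ℕ) (hp : 3 ≤ p) (hq : 3 ≤ q) (hr : 3 ≤ r) :
    cos (π / q) = sin (π / p) * sin (π / r) ↔ (p, q, r) = (4, 3, 4) := by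
  have h2 : √2 ^ 2 = 2 := Real.sq_sqrt (by norm_num)
  have h3 : √3 ^ 2 = 3 := Real.sq_sqrt (by norm_num)
  have h5 : √5 ^ 2 = 5 := Real.sq_sqrt (by norm_num)
  have h2p : (0:ℝ) ≤ √2 := Real.sqrt_nonneg 2
  have h3p : (0:ℝ) ≤ √3 := Real.sqrt_nonneg 3
  have h5p : (0:ℝ) ≤ √5 := Real.sqrt_nonneg 5
  have hs5pos : 0 < Real.sin (π / 5) := aux_sin_pos (by norm_num)
  have hs5sq : Real.sin (π / 5) ^ 2 = (10 - 2 * √5) / 16 := by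
    rw [Real.sin_sq, Real.cos_pi_div_five]
    linear_combination (-1/16 : ℝ) * h5
  have h2b : (1:ℝ) < √2 := by nlinarith [h2, h2p]
  have h2c : (1.4:ℝ) < √2 := by nlinarith [h2, h2p]
  have h5b : (2:ℝ) < √5 := by nlinarith [h5, h5p]
  have h5c : √5 < 9/4 := by nlinarith [h5, h5p]
  constructor
  · intro h
    -- q ≤ 4
    have hqle : q ≤ 4 := by
      by_contra hq5
      have hq5 : 5 ≤ q := by omega
      have hc := aux_cos_ge5 hq5
      rw [Real.cos_pi_div_five] at hc
      have hsp := aux_sin_le hp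
      have hsr := aux_sin_le hr
      have hspp := aux_sin_pos hp
      have hsrp := aux_sin_pos hr
      nlinarith [sq_nonneg (√5 - 2)]
    -- lower bound : cos (π/q) ≥ 1/2
    have hcq := aux_cos_ge hq
    rw [Real.cos_pi_div_three] at hcq
    have hsp := aux_sin_le hp
    have hsr := aux_sin_le hr
    have hspp := aux_sin_pos hp
    have hsrp := aux_sin_pos hr
    have hple : p ≤ 5 := by
      by_contra hp6
      have hp6 : 6 ≤ p := by omega
      have := aux_sin_le6 hp6
      nlinarith [sq_nonneg (√3 - 1)]
    have hrle : r ≤ 5 := by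
      by_contra hr6
      have hr6 : 6 ≤ r := by omega
      have := aux_sin_le6 hr6
      nlinarith [sq_nonneg (√3 - 1)]
    interval_cases p <;> interval_cases q <;> interval_cases r <;>
      push_cast at h <;>
      simp only [Real.cos_pi_div_three, Real.cos_pi_div_four, Real.sin_pi_div_three,
        Real.sin_pi_div_four] at h
    -- (3,3,3)
    · exfalso; nlinarith [h3, h]
    -- (3,3,4)
    · exfalso; nlinarith [h2, h3, h]
    -- (3,3,5)
    · exfalso
      have e : √3 * Real.sin (π/5) = 1 := by linarith
      have e2 : √3 ^ 2 * Real.sin (π/5) ^ 2 = 1 := by rw [← mul_pow, e]; norm_num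
      rw [h3, hs5sq] at e2
      linarith [h5c]
    -- (3,4,3)
    · exfalso; nlinarith [h2, h3, h]
    -- (3,4,4)
    · exfalso
      have e : √3 * √2 = 2 * √2 := by linarith
      have e3 : √3 = 2 := mul_right_cancel₀ (by positivity) e
      nlinarith [h3, e3]
    -- (3,4,5)
    · exfalso
      have e : √3 * Real.sin (π/5) = √2 := by linarith
      have e2 : √3 ^ 2 * Real.sin (π/5) ^ 2 = √2 ^ 2 := by rw [← mul_pow, e]
      rw [h3, hs5sq, h2] at e2
      linarith [h5b]
    -- (4,3,3)
    · exfalso; nlinarith [h2, h3, h]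
    -- (4,3,4)
    · rfl
    -- (4,3,5)
    · exfalso
      have e : √2 * Real.sin (π/5) = 1 := by linarith
      have e2 : √2 ^ 2 * Real.sin (π/5) ^ 2 = 1 := by rw [← mul_pow, e]; norm_num
      rw [h2, hs5sq] at e2
      linarith [h5b]
    -- (4,4,3)
    · exfalso
      have e : √3 * √2 = 2 * √2 := by linarith
      have e3 : √3 = 2 := mul_right_cancel₀ (by positivity) e
      nlinarith [h3, e3]
    -- (4,4,4)
    · exfalso; nlinarith [h2, h2b, h]
    -- (4,4,5)
    · exfalso
      have e : √2 * Real.sin (π/5) = √2 * 1 := by linarith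
      have e3 : Real.sin (π/5) = 1 := mul_left_cancel₀ (by positivity) e
      nlinarith [hs5sq, e3, h5b]
    -- (5,3,3)
    · exfalso
      have e : √3 * Real.sin (π/5) = 1 := by linarith
      have e2 : √3 ^ 2 * Real.sin (π/5) ^ 2 = 1 := by rw [← mul_pow, e]; norm_num
      rw [h3, hs5sq] at e2
      linarith [h5c]
    -- (5,3,4)
    · exfalso
      have e : √2 * Real.sin (π/5) = 1 := by linarith
      have e2 : √2 ^ 2 * Real.sin (π/5) ^ 2 = 1 := by rw [← mul_pow, e]; norm_num
      rw [h2, hs5sq] at e2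
      linarith [h5b]
    -- (5,3,5)
    · exfalso; nlinarith [hs5sq, h5b, h]
    -- (5,4,3)
    · exfalso
      have e : √3 * Real.sin (π/5) = √2 := by linarith
      have e2 : √3 ^ 2 * Real.sin (π/5) ^ 2 = √2 ^ 2 := by rw [← mul_pow, e]
      rw [h3, hs5sq, h2] at e2
      linarith [h5b]
    -- (5,4,4)
    · exfalso
      have e : √2 * Real.sin (π/5) = √2 * 1 := by linarith
      have e3 : Real.sin (π/5) = 1 := mul_left_cancel₀ (by positivity) e
      nlinarith [hs5sq, e3, h5b]
    -- (5,4,5)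
    · exfalso; nlinarith [hs5sq, h2c, h5b, h]
  · rintro h
    obtain ⟨hp4, hq3, hr4⟩ : p = 4 ∧ q = 3 ∧ r = 4 := by
      simpa [Prod.ext_iff] using h
    subst hp4; subst hq3; subst hr4
    push_cast
    rw [Real.cos_pi_div_three, Real.sin_pi_div_four]
    nlinarith [h2]
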